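/- Let μ = √(√5 − 2) and α = ((μ,0),(−μ,0)) ∈ 𝓕₂(B₁(0)). Then α is a critical point of the disc 2-vortex Hamiltonian 𝓗 and the kernel of its Hessian ∇²𝓗(α) ∈ ℝ^{4×4} is exactly one-dimensional, spanned by J₂α = (0,−μ,0,μ). In particular α satisfies condition (A1′)(ii): the domain and g are rotationally invariant and dim ker ∇²𝓗(α) = 1. -/

import Mathlib

/-!
With `U = |a⁰|²`, `V = |a¹|²`, `P = ⟪a⁰, a¹⟫` the Hamiltonian is
`𝓗 = (2π)⁻¹ (log (U + V - 2P) - log (UV - 2P + 1) + log (1 - U) + log (1 - V))`, so its gradient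
and Hessian are sums of logarithmic derivatives of polynomials in `U, V, P`, and at
`α = ((μ,0),(-μ,0))` they are explicit rational functions of `t = μ²`. There the Hessian splits
into a block `[[A, B], [B, A]]` on the first coordinates of the two vortices and a block
`[[C, D], [D, C]]` on the second ones. For `0 < t < 1` we have `A ± B < 0` and `C + D < 0`, the
gradient is a multiple of `C - D`, and `C = D` exactly when `t² + 4t = 1`, i.e. `t = √5 - 2`.
The second block is then `C·(1,1)ᵀ(1,1)`, whose kernel is spanned by `J₂α = ((0,-μ),(0,μ))`.
-/

noncomputable section

open Real

/-- The plane `ℝ²` with its Euclidean structure. -/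
abbrev R2 : Type := EuclideanSpace ℝ (Fin 2)

/-- The standard symplectic matrix `J` (rotation by `-π/2`): `J(x₁,x₂) = (x₂,-x₁)`. -/
def Jrot (x : R2) : R2 := (WithLp.equiv 2 (Fin 2 → ℝ)).symm ![x 1, -(x 0)]

/-- The rotation `e^{θJ}` of the plane. -/
def rotate (θ : ℝ) (x : R2) : R2 :=
  (WithLp.equiv 2 (Fin 2 → ℝ)).symm
    ![Real.cos θ * x 0 + Real.sin θ * x 1, -Real.sin θ * x 0 + Real.cos θ * x 1]

/-- The point `(x₁,x₂) ∈ ℝ²`. -/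
def vec (x₁ x₂ : ℝ) : R2 := (WithLp.equiv 2 (Fin 2 → ℝ)).symm ![x₁, x₂]

/-- The regular part of the Dirichlet Green's function of the unit disc. -/
def discg (x y : R2) : ℝ :=
  -(1 / (4 * π)) * Real.log (‖x‖ ^ 2 * ‖y‖ ^ 2 - 2 * (inner ℝ x y : ℝ) + 1)

/-- The disc `2`-vortex Hamiltonian `𝓗` with vorticities `Γ¹ = 1`, `Γ² = -1`. -/
def discHam (x y : R2) : ℝ :=
  (1 / π) * (Real.log ‖x - y‖
      - 1 / 2 * Real.log (‖x‖ ^ 2 * ‖y‖ ^ 2 - 2 * (inner ℝ x y : ℝ) + 1))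
    + 1 / (2 * π) * (Real.log (1 - ‖x‖ ^ 2) + Real.log (1 - ‖y‖ ^ 2))

/-- The disc `2`-vortex Hamiltonian as a function on `(ℝ²)²`. -/
def discHamV (a : Fin 2 → R2) : ℝ := discHam (a 0) (a 1)

/-- Partial gradient `∇_{zᵢ} f(z) ∈ ℝ²` of a function of several planar variables. -/
def pgrad {ι : Type*} [DecidableEq ι] (f : (ι → R2) → ℝ) (z : ι → R2) (i : ι) : R2 :=
  gradient (fun p => f (Function.update z i p)) (z i)

/-- Kernel of the Hessian `∇²f(z)` viewed as a map into the dual space. -/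
def hessKer {ι : Type*} [Fintype ι] (f : (ι → R2) → ℝ) (z : ι → R2) :
    Submodule ℝ (ι → R2) :=
  LinearMap.ker ((fderiv ℝ (fderiv ℝ f) z : (ι → R2) →ₗ[ℝ] (ι → R2) →L[ℝ] ℝ))

/-- Reflection at the unit circle, `R(y) = y/|y|²`. -/
def Rmap (y : R2) : R2 := (‖y‖ ^ 2)⁻¹ • y

open Filter Topology ContinuousLinearMap
open scoped RealInnerProductSpace

section Calculus

variable {F G : Type*} [NormedAddCommGroup F] [NormedSpace ℝ F]
  [NormedAddCommGroup G] [NormedSpace ℝ G]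

theorem ContinuousLinearMap.hasFDerivAt_apply_self (L : F →L[ℝ] F →L[ℝ] ℝ) (x : F) :
    HasFDerivAt (fun y => L y y) ((L + L.flip) x) x :=
  (L.hasFDerivAt_of_bilinear (hasFDerivAt_id x) (hasFDerivAt_id x)).congr_fderiv (by ext; simp)

/-- The Hessian of `log ∘ f` at a point where `f`, `f'`, `f''` take the values `v`, `d`, `d2`. -/
def logHess (v : ℝ) (d : F →L[ℝ] ℝ) (d2 : F →L[ℝ] F →L[ℝ] ℝ) : F →L[ℝ] F →L[ℝ] ℝ :=
  v⁻¹ • d2 - (v ^ 2)⁻¹ • d.smulRight d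

@[simp]
theorem logHess_apply (v : ℝ) (d : F →L[ℝ] ℝ) (d2 : F →L[ℝ] F →L[ℝ] ℝ) (z w : F) :
    logHess v d d2 z w = d2 z w / v - d z * d w / v ^ 2 := by
  simp [logHess, div_eq_inv_mul]

theorem HasFDerivAt.inv_smul_of_hasFDerivAt {f : F → ℝ} {f' : F → F →L[ℝ] ℝ}
    {f'' : F →L[ℝ] F →L[ℝ] ℝ} {x : F} (hf : HasFDerivAt f (f' x) x)
    (hf' : HasFDerivAt f' f'' x) (hx : f x ≠ 0) :
    HasFDerivAt (fun y => (f y)⁻¹ • f' y)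
      (logHess (f x) (f' x) f'') x := by
  refine (((hasDerivAt_inv hx).comp_hasFDerivAt x hf).smul hf').congr_fderiv ?_
  ext z w
  simp
  ring

theorem fderiv_fderiv_eq_of_eventually_hasFDerivAt {f : F → G} {f' : F → F →L[ℝ] G}
    {f'' : F →L[ℝ] F →L[ℝ] G} {x : F} (h : ∀ᶠ y in 𝓝 x, HasFDerivAt f (f' y) y)
    (h' : HasFDerivAt f' f'' x) : fderiv ℝ (fderiv ℝ f) x = f'' :=
  (h'.congr_of_eventuallyEq (h.mono fun _ hy => hy.fderiv)).fderiv

theorem pgrad_eq_zero_of_hasFDerivAt_zero {ι : Type*} [Fintype ι] [DecidableEq ι]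
    {f : (ι → R2) → ℝ} {z : ι → R2} (h : HasFDerivAt f (0 : (ι → R2) →L[ℝ] ℝ) z) (i : ι) :
    pgrad f z i = 0 := by
  rw [← Function.update_eq_self i z] at h
  have hi := h.comp (z i) (hasFDerivAt_update z (z i))
  rw [zero_comp] at hi
  rw [pgrad, gradient, show (fun p => f (Function.update z i p)) = f ∘ Function.update z i from rfl,
    hi.fderiv, map_zero]

end Calculus

abbrev PairConf : Type := Fin 2 → R2

theorem EuclideanSpace.real_inner_fin_two (x y : R2) : ⟪x, y⟫ = x 0 * y 0 + x 1 * y 1 := by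
  simp [PiLp.inner_apply, Fin.sum_univ_two, mul_comm]

@[simp] theorem vec_apply_zero (x₁ x₂ : ℝ) : vec x₁ x₂ 0 = x₁ := rfl
@[simp] theorem vec_apply_one (x₁ x₂ : ℝ) : vec x₁ x₂ 1 = x₂ := rfl

theorem ker_eq_span_of_blockForm {B : PairConf →L[ℝ] PairConf →L[ℝ] ℝ} {a b c μ : ℝ}
    (hB : ∀ z w, B z w = a * (z 0 0 * w 0 0 + z 1 0 * w 1 0)
      + b * (z 0 0 * w 1 0 + z 1 0 * w 0 0) + c * ((z 0 1 + z 1 1) * (w 0 1 + w 1 1)))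
    (hab : a + b ≠ 0) (hab' : a - b ≠ 0) (hc : c ≠ 0) (hμ : μ ≠ 0) :
    LinearMap.ker (B : PairConf →ₗ[ℝ] PairConf →L[ℝ] ℝ)
      = Submodule.span ℝ {![vec 0 (-μ), vec 0 μ]} := by
  ext z
  rw [LinearMap.mem_ker, Submodule.mem_span_singleton]
  constructor
  · intro hz
    have h : ∀ w, B z w = 0 := fun w => by simpa using DFunLike.congr_fun hz w
    have e₀ := h ![vec 1 0, 0]
    have e₁ := h ![0, vec 1 0]
    have e₂ := h ![vec 0 1, 0]
    simp only [hB] at e₀ e₁ e₂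
    simp only [Matrix.cons_val_zero, Matrix.cons_val_one, PiLp.zero_apply, vec_apply_zero,
      vec_apply_one] at e₀ e₁ e₂
    have hsum : z 0 0 + z 1 0 = 0 := (mul_eq_zero.mp
      (by linear_combination e₀ + e₁ : (a + b) * (z 0 0 + z 1 0) = 0)).resolve_left hab
    have hdiff : z 0 0 - z 1 0 = 0 := (mul_eq_zero.mp
      (by linear_combination e₀ - e₁ : (a - b) * (z 0 0 - z 1 0) = 0)).resolve_left hab'
    have htan : z 0 1 + z 1 1 = 0 :=
      (mul_eq_zero.mp (by linear_combination e₂ : c * (z 0 1 + z 1 1) = 0)).resolve_left hc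
    refine ⟨z 1 1 / μ, funext fun i => ?_⟩
    ext j
    fin_cases i <;> fin_cases j <;> simp [hμ] <;> linarith
  · rintro ⟨k, rfl⟩
    ext w
    simp [hB]

section Rotation

theorem inner_rotate_rotate (θ : ℝ) (x y : R2) : ⟪rotate θ x, rotate θ y⟫ = ⟪x, y⟫ := by
  simp [EuclideanSpace.real_inner_fin_two, rotate]
  linear_combination (x 0 * y 0 + x 1 * y 1) * Real.sin_sq_add_cos_sq θ

theorem norm_rotate (θ : ℝ) (x : R2) : ‖rotate θ x‖ = ‖x‖ := by
  rw [norm_eq_sqrt_real_inner, norm_eq_sqrt_real_inner, inner_rotate_rotate]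

theorem rotate_rotate_neg (θ : ℝ) (x : R2) : rotate θ (rotate (-θ) x) = x := by
  ext j
  fin_cases j <;> simp [rotate]
  · linear_combination x 0 * Real.sin_sq_add_cos_sq θ
  · linear_combination x 1 * Real.sin_sq_add_cos_sq θ

theorem image_rotate_ball (θ : ℝ) : rotate θ '' Metric.ball (0 : R2) 1 = Metric.ball 0 1 := by
  ext y
  simp only [Set.mem_image, Metric.mem_ball, dist_zero_right]
  constructor
  · rintro ⟨x, hx, rfl⟩
    rwa [norm_rotate]
  · intro hy
    exact ⟨rotate (-θ) y, by rwa [norm_rotate], rotate_rotate_neg θ y⟩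

theorem discg_rotate (θ : ℝ) (x y : R2) : discg (rotate θ x) (rotate θ y) = discg x y := by
  rw [discg, discg, norm_rotate, norm_rotate, inner_rotate_rotate]

end Rotation

namespace DiscPair

def innerForm (i j : Fin 2) : PairConf →L[ℝ] PairConf →L[ℝ] ℝ :=
  (innerSL ℝ).bilinearComp (proj i) (proj j)

@[simp]
theorem innerForm_apply (i j : Fin 2) (a b : PairConf) : innerForm i j a b = ⟪a i, b j⟫ := rfl

def quad (i j : Fin 2) (a : PairConf) : ℝ := innerForm i j a a

def quadHess (i j : Fin 2) : PairConf →L[ℝ] PairConf →L[ℝ] ℝ :=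
  innerForm i j + (innerForm i j).flip

@[simp]
theorem quadHess_apply (i j : Fin 2) (a b : PairConf) :
    quadHess i j a b = ⟪a i, b j⟫ + ⟪b i, a j⟫ := rfl

theorem hasFDerivAt_quad (i j : Fin 2) (y : PairConf) :
    HasFDerivAt (quad i j) (quadHess i j y) y :=
  (innerForm i j).hasFDerivAt_apply_self y

def distSq (a : PairConf) : ℝ := quad 0 0 a + quad 1 1 a - 2 * quad 0 1 a

def distSqDeriv (y : PairConf) : PairConf →L[ℝ] ℝ :=
  quadHess 0 0 y + quadHess 1 1 y - (2 : ℝ) • quadHess 0 1 y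

def distSqHess : PairConf →L[ℝ] PairConf →L[ℝ] ℝ :=
  quadHess 0 0 + quadHess 1 1 - (2 : ℝ) • quadHess 0 1

/-- The argument of the logarithm in `g`. -/
def greenArg (a : PairConf) : ℝ := quad 0 0 a * quad 1 1 a - 2 * quad 0 1 a + 1

def greenArgDeriv (y : PairConf) : PairConf →L[ℝ] ℝ :=
  quad 0 0 y • quadHess 1 1 y + quad 1 1 y • quadHess 0 0 y - (2 : ℝ) • quadHess 0 1 y

def greenArgHess (x : PairConf) : PairConf →L[ℝ] PairConf →L[ℝ] ℝ :=
  quad 0 0 x • quadHess 1 1 + (quadHess 0 0 x).smulRight (quadHess 1 1 x)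
    + (quad 1 1 x • quadHess 0 0 + (quadHess 1 1 x).smulRight (quadHess 0 0 x))
    - (2 : ℝ) • quadHess 0 1

@[simp]
theorem distSqDeriv_apply (y w : PairConf) :
    distSqDeriv y w = quadHess 0 0 y w + quadHess 1 1 y w - 2 * quadHess 0 1 y w := rfl

@[simp]
theorem distSqHess_apply (z w : PairConf) :
    distSqHess z w = quadHess 0 0 z w + quadHess 1 1 z w - 2 * quadHess 0 1 z w := rfl

@[simp]
theorem greenArgDeriv_apply (y w : PairConf) : greenArgDeriv y w =
    quad 0 0 y * quadHess 1 1 y w + quad 1 1 y * quadHess 0 0 y w - 2 * quadHess 0 1 y w := rfl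

@[simp]
theorem greenArgHess_apply (x z w : PairConf) : greenArgHess x z w =
    quad 0 0 x * quadHess 1 1 z w + quadHess 0 0 x z * quadHess 1 1 x w
      + (quad 1 1 x * quadHess 0 0 z w + quadHess 1 1 x z * quadHess 0 0 x w)
      - 2 * quadHess 0 1 z w := rfl

theorem hasFDerivAt_distSq (y : PairConf) : HasFDerivAt distSq (distSqDeriv y) y :=
  ((hasFDerivAt_quad 0 0 y).add (hasFDerivAt_quad 1 1 y)).sub
    ((hasFDerivAt_quad 0 1 y).const_mul 2)

theorem hasFDerivAt_distSqDeriv (x : PairConf) : HasFDerivAt distSqDeriv distSqHess x :=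
  distSqHess.hasFDerivAt

theorem hasFDerivAt_greenArg (y : PairConf) : HasFDerivAt greenArg (greenArgDeriv y) y := by
  have := (((hasFDerivAt_quad 0 0 y).mul (hasFDerivAt_quad 1 1 y)).sub
    ((hasFDerivAt_quad 0 1 y).const_mul 2)).add_const 1
  exact this.congr_fderiv (by ext; simp [greenArgDeriv])

theorem hasFDerivAt_greenArgDeriv (x : PairConf) : HasFDerivAt greenArgDeriv (greenArgHess x) x :=
  (((hasFDerivAt_quad 0 0 x).smul (quadHess 1 1).hasFDerivAt).add
    ((hasFDerivAt_quad 1 1 x).smul (quadHess 0 0).hasFDerivAt)).sub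
      ((quadHess 0 1).hasFDerivAt.const_smul (2 : ℝ))

theorem discHamV_eq (a : PairConf) : discHamV a = (2 * π)⁻¹ * (Real.log (distSq a)
    - Real.log (greenArg a) + Real.log (1 - quad 0 0 a) + Real.log (1 - quad 1 1 a)) := by
  have hq : ∀ i j, quad i j a = ⟪a i, a j⟫ := fun _ _ => rfl
  have hdist : distSq a = ‖a 0 - a 1‖ ^ 2 := by
    rw [distSq, hq, hq, hq, norm_sub_sq_real, real_inner_self_eq_norm_sq,
      real_inner_self_eq_norm_sq]
    ring
  rw [discHamV, discHam, hdist, greenArg, hq, hq, hq, real_inner_self_eq_norm_sq,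
    real_inner_self_eq_norm_sq, Real.log_pow]
  push_cast
  field_simp
  ring

def Admissible (a : PairConf) : Prop :=
  distSq a ≠ 0 ∧ greenArg a ≠ 0 ∧ 1 - quad 0 0 a ≠ 0 ∧ 1 - quad 1 1 a ≠ 0

theorem Admissible.eventually {x : PairConf} (hx : Admissible x) : ∀ᶠ y in 𝓝 x, Admissible y :=
  ((hasFDerivAt_distSq x).continuousAt.eventually_ne hx.1).and <|
    ((hasFDerivAt_greenArg x).continuousAt.eventually_ne hx.2.1).and <|
    (((hasFDerivAt_quad 0 0 x).const_sub 1).continuousAt.eventually_ne hx.2.2.1).and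
    (((hasFDerivAt_quad 1 1 x).const_sub 1).continuousAt.eventually_ne hx.2.2.2)

def hamGrad (y : PairConf) : PairConf →L[ℝ] ℝ :=
  (2 * π)⁻¹ • ((distSq y)⁻¹ • distSqDeriv y - (greenArg y)⁻¹ • greenArgDeriv y
    + (1 - quad 0 0 y)⁻¹ • -quadHess 0 0 y + (1 - quad 1 1 y)⁻¹ • -quadHess 1 1 y)

def hamHess (x : PairConf) : PairConf →L[ℝ] PairConf →L[ℝ] ℝ :=
  (2 * π)⁻¹ • (logHess (distSq x) (distSqDeriv x) distSqHess
    - logHess (greenArg x) (greenArgDeriv x) (greenArgHess x)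
    + logHess (1 - quad 0 0 x) (-quadHess 0 0 x) (-quadHess 0 0)
    + logHess (1 - quad 1 1 x) (-quadHess 1 1 x) (-quadHess 1 1))

theorem hasFDerivAt_discHamV {y : PairConf} (hy : Admissible y) :
    HasFDerivAt discHamV (hamGrad y) y := by
  obtain ⟨h₁, h₂, h₃, h₄⟩ := hy
  rw [show discHamV = _ from funext discHamV_eq]
  exact (((((hasFDerivAt_distSq y).log h₁).sub ((hasFDerivAt_greenArg y).log h₂)).add
    (((hasFDerivAt_quad 0 0 y).const_sub 1).log h₃)).add
      (((hasFDerivAt_quad 1 1 y).const_sub 1).log h₄)).const_mul _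

theorem hasFDerivAt_hamGrad {x : PairConf} (hx : Admissible x) :
    HasFDerivAt hamGrad (hamHess x) x := by
  obtain ⟨h₁, h₂, h₃, h₄⟩ := hx
  have hU := ((hasFDerivAt_quad 0 0 x).const_sub 1).inv_smul_of_hasFDerivAt
    (f' := fun y => -quadHess 0 0 y) (quadHess 0 0).hasFDerivAt.neg h₃
  have hV := ((hasFDerivAt_quad 1 1 x).const_sub 1).inv_smul_of_hasFDerivAt
    (f' := fun y => -quadHess 1 1 y) (quadHess 1 1).hasFDerivAt.neg h₄
  exact ((((hasFDerivAt_distSq x).inv_smul_of_hasFDerivAt (hasFDerivAt_distSqDeriv x) h₁).sub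
    ((hasFDerivAt_greenArg x).inv_smul_of_hasFDerivAt (hasFDerivAt_greenArgDeriv x) h₂)).add
      hU).add hV |>.const_smul ((2 * π)⁻¹ : ℝ)

theorem fderiv_fderiv_discHamV {x : PairConf} (hx : Admissible x) :
    fderiv ℝ (fderiv ℝ discHamV) x = hamHess x :=
  fderiv_fderiv_eq_of_eventually_hasFDerivAt (hx.eventually.mono fun _ => hasFDerivAt_discHamV)
    (hasFDerivAt_hamGrad hx)

/-- Together with `radialCross`, `tangentSelf`, `tangentCross`: the entries `A, B, C, D` of the
header as functions of `t = μ²`, without the factor `(2π)⁻¹`. -/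
def radialSelf (t : ℝ) : ℝ :=
  -(1 / (2 * t)) + 2 * t / (1 + t) ^ 2 - 2 / (1 - t) - 4 * t / (1 - t) ^ 2
def radialCross (t : ℝ) : ℝ := 1 / (2 * t) + 2 / (1 + t) ^ 2
def tangentSelf (t : ℝ) : ℝ := 1 / (2 * t) - 2 * t / (1 + t) ^ 2 - 2 / (1 - t)
def tangentCross (t : ℝ) : ℝ := -(1 / (2 * t)) + 2 / (1 + t) ^ 2

section Coefficients

variable {t : ℝ}

theorem radialSelf_add_radialCross_neg (ht : 0 < t) (ht1 : t < 1) :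
    radialSelf t + radialCross t < 0 := by
  have hs : 0 < 1 - t := by linarith
  have h : radialSelf t + radialCross t =
      -(4 * t / ((1 + t) * (1 - t)) + 4 * t / (1 - t) ^ 2) := by
    unfold radialSelf radialCross
    field_simp
    ring
  rw [h, neg_neg_iff_pos]
  positivity

theorem radialSelf_sub_radialCross_neg (ht : 0 < t) (ht1 : t < 1) :
    radialSelf t - radialCross t < 0 := by
  have hs : 0 < 1 - t := by linarith
  have h : radialSelf t - radialCross t =
      -(1 / t + 2 * (1 - t) / (1 + t) ^ 2 + 2 / (1 - t) + 4 * t / (1 - t) ^ 2) := by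
    unfold radialSelf radialCross
    field_simp
    ring
  rw [h, neg_neg_iff_pos]
  positivity

theorem tangentSelf_add_tangentCross_neg (ht : 0 < t) (ht1 : t < 1) :
    tangentSelf t + tangentCross t < 0 := by
  have hs : 0 < 1 - t := by linarith
  have h : tangentSelf t + tangentCross t = -(8 * t / ((1 + t) ^ 2 * (1 - t))) := by
    unfold tangentSelf tangentCross
    field_simp
    ring
  rw [h, neg_neg_iff_pos]
  positivity

theorem tangentSelf_eq_tangentCross (ht : 0 < t) (h : t ^ 2 + 4 * t = 1) :
    tangentSelf t = tangentCross t := by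
  have hs : 1 - t ≠ 0 := by nlinarith
  unfold tangentSelf tangentCross
  field_simp
  linear_combination (-2 - 2 * t) * h

end Coefficients

def antipodal (μ : ℝ) : PairConf := ![vec μ 0, vec (-μ) 0]

variable {μ : ℝ}

@[simp] theorem antipodal_zero : antipodal μ 0 = vec μ 0 := rfl
@[simp] theorem antipodal_one : antipodal μ 1 = vec (-μ) 0 := rfl

@[simp] theorem quad_antipodal (i j : Fin 2) :
    quad i j (antipodal μ) = if i = j then μ ^ 2 else -μ ^ 2 := by
  simp only [quad, innerForm_apply, EuclideanSpace.real_inner_fin_two]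
  fin_cases i <;> fin_cases j <;> simp <;> ring

theorem distSq_antipodal : distSq (antipodal μ) = 4 * μ ^ 2 := by
  simp [distSq]; ring

theorem greenArg_antipodal : greenArg (antipodal μ) = (1 + μ ^ 2) ^ 2 := by
  simp [greenArg]; ring

theorem admissible_antipodal (hμ : μ ≠ 0) (hμ1 : 1 - μ ^ 2 ≠ 0) : Admissible (antipodal μ) := by
  refine ⟨?_, ?_, ?_, ?_⟩ <;> simp [distSq_antipodal, greenArg_antipodal, hμ, hμ1]
  positivity

theorem hamGrad_antipodal_apply (hμ : μ ≠ 0) (hμ1 : 1 - μ ^ 2 ≠ 0) (w : PairConf) :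
    hamGrad (antipodal μ) w =
      (2 * π)⁻¹ * (μ * (tangentSelf (μ ^ 2) - tangentCross (μ ^ 2)) * (w 0 0 - w 1 0)) := by
  have h1 : 1 + μ ^ 2 ≠ 0 := by positivity
  simp [hamGrad, distSqDeriv, greenArgDeriv, quadHess, distSq_antipodal, greenArg_antipodal,
    EuclideanSpace.real_inner_fin_two, tangentSelf, tangentCross]
  field_simp
  ring

theorem hamHess_antipodal_apply (hμ : μ ≠ 0) (hμ1 : 1 - μ ^ 2 ≠ 0) (z w : PairConf) :
    hamHess (antipodal μ) z w = (2 * π)⁻¹ *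
      (radialSelf (μ ^ 2) * (z 0 0 * w 0 0 + z 1 0 * w 1 0)
        + radialCross (μ ^ 2) * (z 0 0 * w 1 0 + z 1 0 * w 0 0)
        + tangentSelf (μ ^ 2) * (z 0 1 * w 0 1 + z 1 1 * w 1 1)
        + tangentCross (μ ^ 2) * (z 0 1 * w 1 1 + z 1 1 * w 0 1)) := by
  have h1 : 1 + μ ^ 2 ≠ 0 := by positivity
  simp only [hamHess, smul_apply, add_apply, sub_apply, logHess_apply]
  simp [distSq_antipodal, greenArg_antipodal, EuclideanSpace.real_inner_fin_two, radialSelf,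
    radialCross, tangentSelf, tangentCross]
  field_simp
  ring

theorem hasFDerivAt_discHamV_antipodal (hμ : 0 < μ) (hcrit : (μ ^ 2) ^ 2 + 4 * μ ^ 2 = 1) :
    HasFDerivAt discHamV (0 : PairConf →L[ℝ] ℝ) (antipodal μ) := by
  have h1 : 1 - μ ^ 2 ≠ 0 := by nlinarith
  refine (hasFDerivAt_discHamV (admissible_antipodal hμ.ne' h1)).congr_fderiv ?_
  ext w
  rw [hamGrad_antipodal_apply hμ.ne' h1, tangentSelf_eq_tangentCross (by positivity) hcrit]
  simp

theorem hessKer_discHamV_antipodal (hμ : 0 < μ) (hcrit : (μ ^ 2) ^ 2 + 4 * μ ^ 2 = 1) :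
    hessKer discHamV (antipodal μ) = Submodule.span ℝ {![vec 0 (-μ), vec 0 μ]} := by
  have ht : 0 < μ ^ 2 := by positivity
  have ht1 : μ ^ 2 < 1 := by nlinarith
  have hπ : (2 * π)⁻¹ ≠ 0 := by positivity
  have htan := tangentSelf_eq_tangentCross ht hcrit
  rw [hessKer, fderiv_fderiv_discHamV (admissible_antipodal hμ.ne' (by linarith))]
  refine ker_eq_span_of_blockForm (a := (2 * π)⁻¹ * radialSelf (μ ^ 2))
    (b := (2 * π)⁻¹ * radialCross (μ ^ 2)) (c := (2 * π)⁻¹ * tangentSelf (μ ^ 2))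
    (fun z w => ?_) ?_ ?_ ?_ hμ.ne'
  · rw [hamHess_antipodal_apply hμ.ne' (by linarith), ← htan]
    ring
  · rw [← mul_add]
    exact mul_ne_zero hπ (radialSelf_add_radialCross_neg ht ht1).ne
  · rw [← mul_sub]
    exact mul_ne_zero hπ (radialSelf_sub_radialCross_neg ht ht1).ne
  · have := tangentSelf_add_tangentCross_neg ht ht1
    exact mul_ne_zero hπ (by linarith)

theorem jrot_antipodal : (fun k => Jrot (antipodal μ k)) = ![vec 0 (-μ), vec 0 μ] := by
  funext k
  ext j
  fin_cases k <;> fin_cases j <;> simp [Jrot, vec]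

end DiscPair

/-- for `μ = √(√5-2)`, `α = ((μ,0),(-μ,0))` is a critical point of the
disc Hamiltonian whose Hessian has exactly the one-dimensional kernel `ℝ·J₂α`; the disc
and `g` are rotationally invariant. -/
theorem statement16 (μ : ℝ) (hμ : μ = Real.sqrt (Real.sqrt 5 - 2))
    (α : Fin 2 → R2) (hα : α = ![vec μ 0, vec (-μ) 0]) :
    (∀ k, pgrad discHamV α k = 0) ∧
    hessKer discHamV α = Submodule.span ℝ {fun k => Jrot (α k)} ∧
    (fun k => Jrot (α k)) = ![vec 0 (-μ), vec 0 μ] ∧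
    Module.finrank ℝ (hessKer discHamV α) = 1 ∧
    (∀ θ : ℝ, rotate θ '' Metric.ball (0 : R2) 1 = Metric.ball (0 : R2) 1) ∧
    (∀ (θ : ℝ) (x y : R2), discg (rotate θ x) (rotate θ y) = discg x y) := by
  have h5 : 2 < √5 := by rw [Real.lt_sqrt zero_le_two]; norm_num
  have hμ0 : 0 < μ := hμ ▸ Real.sqrt_pos.mpr (by linarith)
  have hcrit : (μ ^ 2) ^ 2 + 4 * μ ^ 2 = 1 := by
    rw [hμ, Real.sq_sqrt (by linarith)]
    nlinarith [Real.sq_sqrt (show (0 : ℝ) ≤ 5 by norm_num)]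
  obtain rfl : α = DiscPair.antipodal μ := hα
  have hker := DiscPair.hessKer_discHamV_antipodal hμ0 hcrit
  have hJ : (fun k => Jrot (DiscPair.antipodal μ k)) = ![vec 0 (-μ), vec 0 μ] :=
    DiscPair.jrot_antipodal
  have hJ0 : (![vec 0 (-μ), vec 0 μ] : PairConf) ≠ 0 := fun h => hμ0.ne' <| by
    simpa using congrArg (fun a : PairConf => a 1 1) h
  refine ⟨pgrad_eq_zero_of_hasFDerivAt_zero (DiscPair.hasFDerivAt_discHamV_antipodal hμ0 hcrit),
    by rw [hker, hJ], hJ, by rw [hker]; exact finrank_span_singleton hJ0, image_rotate_ball,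
    discg_rotate⟩
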